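/- Let H be a real Hilbert space, u ∈ H, and let O_1, …, O_N be complete (closed) subspaces of H satisfying the partition-of-unity stability property with constant c_pu > 0. Let (W_n)_{n≥0} be a sequence of finite-dimensional subspaces of H defined recursively by W_0 = {0} and W_{n+1} = W_n + span{P_{O_{k_n}}(u − P_{W_n} u)}, where for each n the index k_n ∈ {1,…,N} satisfies ‖P_{O_{k_n}}(u − P_{W_n} u)‖ ≥ ‖P_{O_i}(u − P_{W_n} u)‖ for all i = 1,…,N. Then for all n ≥ 0: ‖u − P_{W_n} u‖ ≤ c^n · ‖u‖, where c := sqrt(1 − 1/(N · c_pu²)). -/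

import Mathlib

/-!
Write `e = u - P_{W n} u` for the current error. Decomposing `e = ∑ ψ i` stably gives
`‖e‖² = ∑ ⟪P_{O i} e, ψ i⟫ ≤ max_i ‖P_{O i} e‖ · √N · c_pu ‖e‖`, so the greedy
projection `p = P_{O (k n)} e` carries at least the fraction `1 / (N c_pu²)` of `‖e‖²`. Since
`P_{W n} u + p ∈ W (n + 1)` and `p ⟂ e - p`, the new error is at most
`‖e - p‖ = √(‖e‖² - ‖p‖²) ≤ √(1 - 1/(N c_pu²)) ‖e‖`.
-/

open Finset

namespace Submodule

variable {𝕜 H : Type*} [RCLike 𝕜] [NormedAddCommGroup H] [InnerProductSpace 𝕜 H]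

theorem norm_sub_starProjection_le (K : Submodule 𝕜 H) [K.HasOrthogonalProjection] (u : H)
    {v : H} (hv : v ∈ K) : ‖u - K.starProjection u‖ ≤ ‖u - v‖ := by
  rw [starProjection_minimal]
  exact ciInf_le ⟨0, by rintro _ ⟨x, rfl⟩; positivity⟩ (⟨v, hv⟩ : K)

theorem norm_sq_eq_norm_starProjection_sq_add_norm_sub_sq (K : Submodule 𝕜 H)
    [K.HasOrthogonalProjection] (e : H) :
    ‖e‖ ^ 2 = ‖K.starProjection e‖ ^ 2 + ‖e - K.starProjection e‖ ^ 2 := by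
  simpa [starProjection_orthogonal'] using K.norm_sq_eq_add_norm_sq_starProjection e

theorem norm_sub_starProjection_le_sqrt_mul (K : Submodule 𝕜 H) [K.HasOrthogonalProjection]
    {e : H} {κ : ℝ} (hκ : 0 ≤ κ) (he : ‖e‖ ^ 2 ≤ κ * ‖K.starProjection e‖ ^ 2) :
    ‖e - K.starProjection e‖ ≤ √(1 - 1 / κ) * ‖e‖ := by
  have hgain : ‖e‖ ^ 2 / κ ≤ ‖K.starProjection e‖ ^ 2 :=
    div_le_of_le_mul₀ hκ (sq_nonneg _) (he.trans_eq (mul_comm _ _))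
  have hsq : ‖e - K.starProjection e‖ ^ 2 ≤ (1 - 1 / κ) * ‖e‖ ^ 2 := by
    have := K.norm_sq_eq_norm_starProjection_sq_add_norm_sub_sq e
    rw [sub_mul, one_div_mul_eq_div]
    linarith
  calc ‖e - K.starProjection e‖ = √(‖e - K.starProjection e‖ ^ 2) :=
        (Real.sqrt_sq (norm_nonneg _)).symm
    _ ≤ √((1 - 1 / κ) * ‖e‖ ^ 2) := Real.sqrt_le_sqrt hsq
    _ = √(1 - 1 / κ) * ‖e‖ := by
        rw [Real.sqrt_mul' _ (sq_nonneg _), Real.sqrt_sq (norm_nonneg _)]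

theorem norm_sub_starProjection_le_of_le_of_mem {W W' O : Submodule 𝕜 H}
    [W.HasOrthogonalProjection] [W'.HasOrthogonalProjection] [O.HasOrthogonalProjection] (u : H)
    (hW : W ≤ W') (hO : O.starProjection (u - W.starProjection u) ∈ W') :
    ‖u - W'.starProjection u‖ ≤
      ‖u - W.starProjection u - O.starProjection (u - W.starProjection u)‖ := by
  have hmem := W'.add_mem (hW (W.starProjection_apply_mem u)) hO
  rw [sub_sub]
  exact W'.norm_sub_starProjection_le u hmem

end Submodule

section StableDecomposition

variable {ι H : Type*} [Fintype ι] [NormedAddCommGroup H] [InnerProductSpace ℝ H]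

def HasStableDecomposition (O : ι → Submodule ℝ H) (C : ℝ) : Prop :=
  ∀ φ : H, ∃ ψ : ι → H, (∀ i, ψ i ∈ O i) ∧ (∑ i, ψ i) = φ ∧
    ∑ i, ‖ψ i‖ ^ 2 ≤ C ^ 2 * ‖φ‖ ^ 2

theorem HasStableDecomposition.norm_sq_le {O : ι → Submodule ℝ H}
    [∀ i, (O i).HasOrthogonalProjection] {C : ℝ} (hO : HasStableDecomposition O C)
    {e : H} {r : ℝ} (hr : ∀ i, ‖(O i).starProjection e‖ ≤ r) :
    ‖e‖ ^ 2 ≤ Fintype.card ι * C ^ 2 * r ^ 2 := by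
  obtain ⟨ψ, hψO, hψsum, hψnorm⟩ := hO e
  set S := ∑ i, ‖ψ i‖
  have hS : S ^ 2 ≤ Fintype.card ι * C ^ 2 * ‖e‖ ^ 2 :=
    calc S ^ 2 ≤ Fintype.card ι * ∑ i, ‖ψ i‖ ^ 2 := sq_sum_le_card_mul_sum_sq
      _ ≤ Fintype.card ι * (C ^ 2 * ‖e‖ ^ 2) := by gcongr
      _ = Fintype.card ι * C ^ 2 * ‖e‖ ^ 2 := by ring
  have he : ‖e‖ ^ 2 ≤ r * S :=
    calc ‖e‖ ^ 2 = ∑ i, inner ℝ e (ψ i) := by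
          rw [← inner_sum, hψsum, real_inner_self_eq_norm_sq]
      _ = ∑ i, inner ℝ ((O i).starProjection e) (ψ i) := by
          refine sum_congr rfl fun i _ => ?_
          have := (O i).starProjection_inner_eq_zero e (ψ i) (hψO i)
          rwa [inner_sub_left, sub_eq_zero] at this
      _ ≤ ∑ i, r * ‖ψ i‖ := by
          gcongr with i
          exact (real_inner_le_norm _ _).trans
            (mul_le_mul_of_nonneg_right (hr i) (norm_nonneg _))
      _ = r * S := (mul_sum _ _ _).symm
  rcases (sq_nonneg ‖e‖).eq_or_lt with he0 | hpos
  · rw [← he0]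
    positivity
  refine le_of_mul_le_mul_right ?_ hpos
  calc Fintype.card ι * C ^ 2 * r ^ 2 * ‖e‖ ^ 2
        = r ^ 2 * (Fintype.card ι * C ^ 2 * ‖e‖ ^ 2) := by ring
    _ ≥ r ^ 2 * S ^ 2 := by gcongr
    _ = (r * S) ^ 2 := (mul_pow _ _ _).symm
    _ ≥ ‖e‖ ^ 2 * ‖e‖ ^ 2 := by rw [← sq]; exact pow_le_pow_left₀ (sq_nonneg _) he 2

end StableDecomposition

theorem residual_enrichment_exponential_convergence_general
    {H : Type*} [NormedAddCommGroup H] [InnerProductSpace ℝ H]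
    (u : H) (N : ℕ) (O : Fin N → Submodule ℝ H) [∀ i, CompleteSpace (O i)]
    (c_pu : ℝ)
    (hpu : ∀ φ : H, ∃ ψ : Fin N → H, (∀ i, ψ i ∈ O i) ∧ (∑ i, ψ i) = φ ∧
      ∑ i, ‖ψ i‖ ^ 2 ≤ c_pu ^ 2 * ‖φ‖ ^ 2)
    (W : ℕ → Submodule ℝ H) [∀ n, FiniteDimensional ℝ (W n)]
    (k : ℕ → Fin N)
    (hW0 : W 0 = ⊥)
    (hWsucc : ∀ n, W (n + 1) = W n ⊔ Submodule.span ℝ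
      {((Submodule.orthogonalProjectionOnto (O (k n)) (u - (Submodule.orthogonalProjectionOnto (W n) u : H)) : H))})
    (hk : ∀ n i,
      ‖(Submodule.orthogonalProjectionOnto (O i) (u - (Submodule.orthogonalProjectionOnto (W n) u : H)) : H)‖ ≤
      ‖(Submodule.orthogonalProjectionOnto (O (k n)) (u - (Submodule.orthogonalProjectionOnto (W n) u : H)) : H)‖) :
    ∀ n, ‖u - (Submodule.orthogonalProjectionOnto (W n) u : H)‖ ≤
      Real.sqrt (1 - 1 / (N * c_pu ^ 2)) ^ n * ‖u‖ := by
  simp only [← Submodule.starProjection_apply] at hWsucc hk ⊢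
  have hstep : ∀ n, ‖u - (W (n + 1)).starProjection u‖ ≤
      √(1 - 1 / (N * c_pu ^ 2)) * ‖u - (W n).starProjection u‖ := by
    intro n
    set e := u - (W n).starProjection u
    have hgreedy : ‖e‖ ^ 2 ≤ N * c_pu ^ 2 * ‖(O (k n)).starProjection e‖ ^ 2 := by
      simpa only [Fintype.card_fin] using HasStableDecomposition.norm_sq_le hpu (hk n)
    calc ‖u - (W (n + 1)).starProjection u‖ ≤ ‖e - (O (k n)).starProjection e‖ :=
          Submodule.norm_sub_starProjection_le_of_le_of_mem u (hWsucc n ▸ le_sup_left)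
            (hWsucc n ▸ Submodule.mem_sup_right (Submodule.mem_span_singleton_self _))
      _ ≤ √(1 - 1 / (N * c_pu ^ 2)) * ‖e‖ :=
          Submodule.norm_sub_starProjection_le_sqrt_mul _ (by positivity) hgreedy
  have hinit : (W 0).starProjection u = 0 :=
    (Submodule.mem_bot ℝ).1 (hW0 ▸ (W 0).starProjection_apply_mem u)
  intro n
  simpa [hinit] using
    le_geom (u := fun m => ‖u - (W m).starProjection u‖) (Real.sqrt_nonneg _) n fun m _ => hstep m

/-- Corollary 1 (exponential convergence of residual-based online enrichment,
Algorithm 1): starting from `W 0 = ⊥` and enriching in each step by the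
projection of the current error onto the local space with maximal projected
error, the reduced solutions `P_{W n} u` satisfy
`‖u - P_{W n} u‖ ≤ c^n ‖u‖` with `c = sqrt(1 - 1/(N c_pu²))`. -/
theorem residual_enrichment_exponential_convergence
    {H : Type*} [NormedAddCommGroup H] [InnerProductSpace ℝ H] [CompleteSpace H]
    (u : H) (N : ℕ) (O : Fin N → Submodule ℝ H) [∀ i, CompleteSpace (O i)]
    (c_pu : ℝ) (hc_pu : 0 < c_pu)
    (hpu : ∀ φ : H, ∃ ψ : Fin N → H, (∀ i, ψ i ∈ O i) ∧ (∑ i, ψ i) = φ ∧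
      ∑ i, ‖ψ i‖ ^ 2 ≤ c_pu ^ 2 * ‖φ‖ ^ 2)
    (W : ℕ → Submodule ℝ H) [∀ n, FiniteDimensional ℝ (W n)]
    (k : ℕ → Fin N)
    (hW0 : W 0 = ⊥)
    (hWsucc : ∀ n, W (n + 1) = W n ⊔ Submodule.span ℝ
      {((Submodule.orthogonalProjectionOnto (O (k n)) (u - (Submodule.orthogonalProjectionOnto (W n) u : H)) : H))})
    (hk : ∀ n i,
      ‖(Submodule.orthogonalProjectionOnto (O i) (u - (Submodule.orthogonalProjectionOnto (W n) u : H)) : H)‖ ≤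
      ‖(Submodule.orthogonalProjectionOnto (O (k n)) (u - (Submodule.orthogonalProjectionOnto (W n) u : H)) : H)‖) :
    ∀ n, ‖u - (Submodule.orthogonalProjectionOnto (W n) u : H)‖ ≤
      Real.sqrt (1 - 1 / (N * c_pu ^ 2)) ^ n * ‖u‖ :=
  residual_enrichment_exponential_convergence_general u N O c_pu hpu W k hW0 hWsucc hk
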